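/- Let V = Σ_{i=0}^{d} n_i·Sym^{2i}(ℂ²) and W = Σ_{i=1}^{d} m_i·Sym^{2i−1}(ℂ²) be two finite-dimensional representations of SU(2). Then 2·dim(V⊗W)[1] − dim(V⊗V)[2] − dim(W⊗W)[2] ≤ Σ_{i=0}^{d} n_i² + Σ_{i=1}^{d} m_i². -/

import Mathlib

/-- `wtDim ℓ k` is the dimension of the `k`-weight space (for the standard maximal torus
`S¹ ⊂ SU(2)`, acting by `z ↦ z^k`) of the representation `⊕ᵢ ℓ i · Sym^i(ℂ²)` of `SU(2)`
encoded by its multiplicity function `ℓ : ℕ → ℕ`: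
`dim E[k] = Σ_{i ≥ |k|, i ≡ k (mod 2)} ℓ i`. -/
noncomputable def wtDim (ℓ : ℕ → ℕ) (k : ℤ) : ℕ :=
  ∑ᶠ i : ℕ, if k.natAbs ≤ i ∧ k % 2 = (i : ℤ) % 2 then ℓ i else 0

/-- `tensorWtDim ℓ₁ ℓ₂ k` is the dimension of the `k`-weight space of the tensor product
of the `SU(2)`-representations encoded by `ℓ₁` and `ℓ₂`:
`dim (E⊗F)[k] = Σ_{j ∈ ℤ} dim E[j] · dim F[k-j]`. -/
noncomputable def tensorWtDim (ℓ₁ ℓ₂ : ℕ → ℕ) (k : ℤ) : ℕ :=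
  ∑ᶠ j : ℤ, wtDim ℓ₁ j * wtDim ℓ₂ (k - j)

/-- Multiplicity function of `V = Σ_{i=0}^{d} n_i · Sym^{2i}(ℂ²)`
(trivial central character). -/
def evenRep (d : ℕ) (n : ℕ → ℕ) : ℕ → ℕ :=
  fun j => if j % 2 = 0 ∧ j / 2 ≤ d then n (j / 2) else 0

/-- Multiplicity function of `W = Σ_{i=1}^{d} m_i · Sym^{2i-1}(ℂ²)`
(non-trivial central character). -/
def oddRep (d : ℕ) (m : ℕ → ℕ) : ℕ → ℕ :=
  fun j => if j % 2 = 1 ∧ (j + 1) / 2 ≤ d then m ((j + 1) / 2) else 0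

/-!
Write `e j = dim V[j]` and `f j = dim W[j]`. Telescoping `dim E[j] - dim E[j + 2] = ℓ j`
(for `j ≥ 0`, and its mirror image for `j ≤ -2`) gives Schur's count `Σ ℓᵢ² = dim (E⊗E)[0] - dim (E⊗E)[2]`.
So the right-hand side minus the left-hand side is
`dim (V⊗V)[0] + dim (W⊗W)[0] - 2 dim (V⊗W)[1] = Σ_j (e j - f (1 - j))² ≥ 0`.
-/

open Function

section WeightSpaces

variable {ℓ : ℕ → ℕ}

theorem wtDim_neg (ℓ : ℕ → ℕ) (k : ℤ) : wtDim ℓ (-k) = wtDim ℓ k := by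
  simp only [wtDim, Int.natAbs_neg, Int.neg_emod_two]

theorem hasFiniteSupport_wtDim (hℓ : ℓ.HasFiniteSupport) : (wtDim ℓ).HasFiniteSupport := by
  obtain ⟨B, hB⟩ := hℓ.bddAbove
  refine (Set.finite_Icc (-B : ℤ) B).subset fun k hk => ?_
  have hkB : k.natAbs ≤ B := by
    by_contra! hBk
    refine hk (finsum_eq_zero_of_forall_eq_zero fun i => ite_eq_right_iff.mpr fun hi => ?_)
    by_contra hℓi
    exact absurd (hB hℓi) (by omega)
  simp only [Set.mem_Icc]
  omega

theorem wtDim_natCast (hℓ : ℓ.HasFiniteSupport) (k : ℕ) :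
    wtDim ℓ k = ℓ k + wtDim ℓ (k + 2) := by
  have hsplit : ∀ i : ℕ, (if (k : ℤ).natAbs ≤ i ∧ (k : ℤ) % 2 = (i : ℤ) % 2 then ℓ i else 0) =
      (if i = k then ℓ i else 0) +
        if ((k : ℤ) + 2).natAbs ≤ i ∧ ((k : ℤ) + 2) % 2 = (i : ℤ) % 2 then ℓ i else 0 := by
    intro i
    split_ifs <;> omega
  have hfin : ∀ p : ℕ → Prop, [DecidablePred p] →
      (fun i => if p i then ℓ i else 0).HasFiniteSupport := fun p _ =>
    hℓ.subset fun i hi => by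
      by_contra h
      exact hi (by simp [show ℓ i = 0 by simpa using h])
  rw [wtDim, finsum_congr hsplit, finsum_add_distrib (hfin _) (hfin _),
    finsum_eq_single _ k fun i hi => if_neg hi, if_pos rfl]
  rfl

def intMult (ℓ : ℕ → ℕ) (j : ℤ) : ℤ := if 0 ≤ j then ℓ j.toNat else 0

theorem intMult_natCast (ℓ : ℕ → ℕ) (k : ℕ) : intMult ℓ k = ℓ k := by
  simp [intMult]

theorem intMult_of_neg (ℓ : ℕ → ℕ) {j : ℤ} (hj : j < 0) : intMult ℓ j = 0 :=
  if_neg hj.not_ge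

theorem hasFiniteSupport_intMult (hℓ : ℓ.HasFiniteSupport) : (intMult ℓ).HasFiniteSupport := by
  refine (hℓ.image ((↑) : ℕ → ℤ)).subset fun j hj => ?_
  by_cases h : j < 0
  · exact absurd (intMult_of_neg ℓ h) hj
  · lift j to ℕ using not_lt.mp h
    rw [mem_support, intMult_natCast] at hj
    exact ⟨j, by simpa using hj, rfl⟩

theorem finsum_intMult_sq (ℓ : ℕ → ℕ) : ∑ᶠ j, intMult ℓ j ^ 2 = ∑ᶠ i, (ℓ i : ℤ) ^ 2 := by
  rw [← finsum_mem_univ, finsum_mem_inter_support_eq' _ _ (Set.range ((↑) : ℕ → ℤ)),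
    finsum_mem_range Nat.cast_injective]
  · simp only [intMult_natCast]
  · intro j hj
    simp only [Set.mem_univ, Set.mem_range, true_iff]
    lift j to ℕ using not_lt.mp fun h => hj (by simp [intMult_of_neg ℓ h])
    exact ⟨j, rfl⟩

theorem wtDim_sub_wtDim_add_two (hℓ : ℓ.HasFiniteSupport) (j : ℤ) :
    (wtDim ℓ j : ℤ) - wtDim ℓ (j + 2) = intMult ℓ j - intMult ℓ (-2 - j) := by
  rcases le_or_gt 0 j with hj | hj
  · lift j to ℕ using hj
    rw [wtDim_natCast hℓ, intMult_natCast, intMult_of_neg ℓ (by omega)]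
    push_cast
    ring
  rcases (show j ≤ -1 by omega).eq_or_lt with rfl | hj'
  · rw [show (-1 + 2 : ℤ) = - -1 by norm_num, wtDim_neg]
    norm_num
  · obtain ⟨k, hk⟩ : ∃ k : ℕ, -2 - j = k := ⟨(-2 - j).toNat, by omega⟩
    rw [hk, intMult_natCast, intMult_of_neg ℓ hj, ← wtDim_neg ℓ j, show -j = (k + 2 : ℕ) by omega,
      show j + 2 = -k by omega, wtDim_neg, wtDim_natCast hℓ k]
    push_cast
    ring

theorem intMult_mul_intMult_neg_two_sub (ℓ : ℕ → ℕ) (j : ℤ) :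
    intMult ℓ j * intMult ℓ (-2 - j) = 0 := by
  rcases lt_or_ge j 0 with hj | hj
  · rw [intMult_of_neg ℓ hj, zero_mul]
  · rw [intMult_of_neg ℓ (show -2 - j < 0 by omega), mul_zero]

theorem finsum_sq_eq_finsum_wtDim_mul (hℓ : ℓ.HasFiniteSupport) :
    ∑ᶠ i, (ℓ i : ℤ) ^ 2 = ∑ᶠ j, (wtDim ℓ j : ℤ) * (wtDim ℓ j - wtDim ℓ (j + 2)) := by
  have he : (fun j => (wtDim ℓ j : ℤ)).HasFiniteSupport :=
    (hasFiniteSupport_wtDim hℓ).fun_comp Nat.cast_zero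
  have hL := hasFiniteSupport_intMult hℓ
  have hreindex : ∑ᶠ j, (wtDim ℓ j : ℤ) * intMult ℓ (-2 - j) =
      ∑ᶠ j, (wtDim ℓ (j + 2) : ℤ) * intMult ℓ j := by
    rw [← finsum_comp_equiv (Equiv.subLeft (-2))]
    simp only [Equiv.subLeft_apply, sub_sub_cancel, ← wtDim_neg ℓ (_ + 2), neg_add_rev]
    ring_nf
  calc ∑ᶠ i, (ℓ i : ℤ) ^ 2
      = ∑ᶠ j, (intMult ℓ j * wtDim ℓ j - wtDim ℓ (j + 2) * intMult ℓ j) := by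
        rw [← finsum_intMult_sq]
        refine finsum_congr fun j => ?_
        linear_combination -intMult ℓ j * wtDim_sub_wtDim_add_two hℓ j +
          intMult_mul_intMult_neg_two_sub ℓ j
    _ = ∑ᶠ j, (wtDim ℓ j : ℤ) * intMult ℓ j - ∑ᶠ j, (wtDim ℓ j : ℤ) * intMult ℓ (-2 - j) := by
        rw [finsum_sub_distrib (by fun_prop) (by fun_prop), hreindex]
        simp only [mul_comm]
    _ = ∑ᶠ j, (wtDim ℓ j : ℤ) * (wtDim ℓ j - wtDim ℓ (j + 2)) := by
        rw [← finsum_sub_distrib (by fun_prop) (by fun_prop)]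
        simp only [← mul_sub, wtDim_sub_wtDim_add_two hℓ]

end WeightSpaces

theorem Nat.cast_finsum_of_hasFiniteSupport {α M : Type*} [AddCommMonoidWithOne M] {f : α → ℕ}
    (hf : f.HasFiniteSupport) : ((∑ᶠ a, f a : ℕ) : M) = ∑ᶠ a, (f a : M) :=
  (Nat.castAddMonoidHom M).map_finsum hf

section TensorProducts

variable {ℓ ℓ' : ℕ → ℕ}

theorem tensorWtDim_self (ℓ : ℕ → ℕ) (k : ℤ) :
    tensorWtDim ℓ ℓ k = ∑ᶠ j, wtDim ℓ j * wtDim ℓ (j + k) := by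
  rw [tensorWtDim, ← finsum_comp_equiv (Equiv.neg ℤ)]
  simp only [Equiv.neg_apply, wtDim_neg, sub_neg_eq_add, add_comm k]

theorem finsum_sq_eq_tensorWtDim_zero_sub_two (hℓ : ℓ.HasFiniteSupport) :
    ∑ᶠ i, (ℓ i : ℤ) ^ 2 = (tensorWtDim ℓ ℓ 0 : ℤ) - tensorWtDim ℓ ℓ 2 := by
  have he := hasFiniteSupport_wtDim hℓ
  have he' : (fun j => (wtDim ℓ j : ℤ)).HasFiniteSupport := he.fun_comp Nat.cast_zero
  have hcast : ∀ k, (tensorWtDim ℓ ℓ k : ℤ) = ∑ᶠ j, (wtDim ℓ j : ℤ) * wtDim ℓ (j + k) := fun k => by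
    rw [tensorWtDim_self, Nat.cast_finsum_of_hasFiniteSupport (by fun_prop)]
    push_cast
    rfl
  rw [finsum_sq_eq_finsum_wtDim_mul hℓ, hcast, hcast,
    ← finsum_sub_distrib (by fun_prop) (by fun_prop)]
  simp only [add_zero, mul_sub]

theorem two_mul_tensorWtDim_le (hℓ : ℓ.HasFiniteSupport) (hℓ' : ℓ'.HasFiniteSupport) (k : ℤ) :
    2 * tensorWtDim ℓ ℓ' k ≤ tensorWtDim ℓ ℓ 0 + tensorWtDim ℓ' ℓ' 0 := by
  have he := hasFiniteSupport_wtDim hℓ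
  have hf := (hasFiniteSupport_wtDim hℓ').fun_comp_of_injective (sub_right_injective (b := k))
  calc 2 * tensorWtDim ℓ ℓ' k
      = ∑ᶠ j, 2 * (wtDim ℓ j * wtDim ℓ' (k - j)) := mul_finsum _ _
    _ ≤ ∑ᶠ j, (wtDim ℓ j * wtDim ℓ j + wtDim ℓ' (k - j) * wtDim ℓ' (k - j)) :=
        finsum_le_finsum' (by fun_prop) (by fun_prop) fun j => by
          simpa only [mul_assoc, sq] using two_mul_le_add_sq (wtDim ℓ j) (wtDim ℓ' (k - j))
    _ = tensorWtDim ℓ ℓ 0 + tensorWtDim ℓ' ℓ' 0 := by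
        rw [finsum_add_distrib (by fun_prop) (by fun_prop), tensorWtDim_self, tensorWtDim_self,
          ← finsum_comp_equiv (Equiv.subLeft k) (f := fun j => wtDim ℓ' j * wtDim ℓ' (j + 0))]
        simp only [Equiv.subLeft_apply, add_zero]

end TensorProducts

theorem two_mul_tensorWtDim_one_sub_le {ℓ ℓ' : ℕ → ℕ} (hℓ : ℓ.HasFiniteSupport)
    (hℓ' : ℓ'.HasFiniteSupport) :
    2 * (tensorWtDim ℓ ℓ' 1 : ℤ) - tensorWtDim ℓ ℓ 2 - tensorWtDim ℓ' ℓ' 2 ≤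
      (∑ᶠ i, (ℓ i : ℤ) ^ 2) + ∑ᶠ i, (ℓ' i : ℤ) ^ 2 := by
  have h := two_mul_tensorWtDim_le hℓ hℓ' 1
  rw [finsum_sq_eq_tensorWtDim_zero_sub_two hℓ, finsum_sq_eq_tensorWtDim_zero_sub_two hℓ']
  omega

theorem hasFiniteSupport_evenRep (d : ℕ) (n : ℕ → ℕ) : (evenRep d n).HasFiniteSupport :=
  (Finset.range (2 * d + 1)).finite_toSet.subset fun j hj => by
    simp only [mem_support, evenRep, ne_eq, ite_eq_right_iff, Classical.not_imp] at hj
    simp only [Finset.coe_range, Set.mem_Iio]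
    omega

theorem hasFiniteSupport_oddRep (d : ℕ) (m : ℕ → ℕ) : (oddRep d m).HasFiniteSupport :=
  (Finset.range (2 * d)).finite_toSet.subset fun j hj => by
    simp only [mem_support, oddRep, ne_eq, ite_eq_right_iff, Classical.not_imp] at hj
    simp only [Finset.coe_range, Set.mem_Iio]
    omega

theorem finsum_evenRep_sq (d : ℕ) (n : ℕ → ℕ) :
    ∑ᶠ j, (evenRep d n j : ℤ) ^ 2 = ∑ i ∈ Finset.range (d + 1), (n i : ℤ) ^ 2 := by
  have hinj : Injective (2 * · : ℕ → ℕ) := mul_right_injective₀ two_ne_zero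
  rw [finsum_eq_sum_of_support_subset _ (s := (Finset.range (d + 1)).map ⟨_, hinj⟩), Finset.sum_map]
  · refine Finset.sum_congr rfl fun i hi => ?_
    simp only [Finset.mem_range] at hi
    simp only [Embedding.coeFn_mk, evenRep]
    rw [if_pos (by omega), Nat.mul_div_cancel_left i two_pos]
  · intro j hj
    have hj : j % 2 = 0 ∧ j / 2 ≤ d := by
      by_contra h
      exact hj (by simp [evenRep, h])
    simp only [Finset.coe_map, Embedding.coeFn_mk, Finset.coe_range, Set.mem_image, Set.mem_Iio]
    exact ⟨j / 2, by omega, by omega⟩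

theorem finsum_oddRep_sq (d : ℕ) (m : ℕ → ℕ) :
    ∑ᶠ j, (oddRep d m j : ℤ) ^ 2 = ∑ i ∈ Finset.Icc 1 d, (m i : ℤ) ^ 2 := by
  have hinj : Set.InjOn (2 * · - 1 : ℕ → ℕ) (Finset.Icc 1 d) := fun a ha b hb h => by
    simp only [Finset.coe_Icc, Set.mem_Icc] at ha hb h
    omega
  rw [finsum_eq_sum_of_support_subset _ (s := (Finset.Icc 1 d).image (2 * · - 1)),
    Finset.sum_image hinj]
  · refine Finset.sum_congr rfl fun i hi => ?_
    simp only [Finset.mem_Icc] at hi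
    simp only [oddRep]
    rw [if_pos (by omega), show (2 * i - 1 + 1) / 2 = i by omega]
  · intro j hj
    have hj : j % 2 = 1 ∧ (j + 1) / 2 ≤ d := by
      by_contra h
      exact hj (by simp [oddRep, h])
    simp only [Finset.coe_image, Finset.coe_Icc, Set.mem_image, Set.mem_Icc]
    exact ⟨(j + 1) / 2, by omega, by omega⟩

/-- For `V = Σ_{i=0}^{d} n_i·Sym^{2i}(ℂ²)` and `W = Σ_{i=1}^{d} m_i·Sym^{2i-1}(ℂ²)`,
`2·dim(V⊗W)[1] − dim(V⊗V)[2] − dim(W⊗W)[2] ≤ Σ_{i=0}^{d} n_i² + Σ_{i=1}^{d} m_i²`. -/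
theorem corollary_two_weight_bound (d : ℕ) (n m : ℕ → ℕ) :
    2 * (tensorWtDim (evenRep d n) (oddRep d m) 1 : ℤ)
        - tensorWtDim (evenRep d n) (evenRep d n) 2
        - tensorWtDim (oddRep d m) (oddRep d m) 2 ≤
      (∑ i ∈ Finset.range (d + 1), (n i : ℤ) ^ 2)
        + ∑ i ∈ Finset.Icc 1 d, (m i : ℤ) ^ 2 := by
  rw [← finsum_evenRep_sq, ← finsum_oddRep_sq]
  exact two_mul_tensorWtDim_one_sub_le (hasFiniteSupport_evenRep d n) (hasFiniteSupport_oddRep d m)
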